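/- Let S be a real symmetric positive definite n×n matrix and let (Φ_k)_{k∈ℕ} be vectors in ℝⁿ with ‖Φ_k‖ ≤ 1 for all k. Define the sequence x : ℕ → ℝⁿ by x_{k+1} = x_k − ζ_k (S + Φ_kΦ_kᵀ) x_k, where ζ_k = λmin(S)/(λmax(Φ_kΦ_kᵀ) + λmax(S))². Then for all k, ‖x_k‖ ≤ q^k ‖x_0‖, where q = √(1 − λmin(S)²/(1 + λmax(S))²) < 1; in particular x_k converges to 0 exponentially. -/

import Mathlib

/-!
Write `A = S + ΦΦᵀ`, `m = λmin(S) > 0` and `M = λmax(ΦΦᵀ) + λmax(S)`. Since `ΦΦᵀ` is positive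
semidefinite with `λmax(ΦΦᵀ) ≤ ‖Φ‖² ≤ 1`, evaluating Rayleigh quotients at the eigenvectors of `A`
puts its spectrum in `[m, M]` with `M ≤ 1 + λmax(S)`. In the eigenbasis of `A` one update multiplies
each coordinate by `1 - (m / M²) λ ∈ [0, 1 - m² / M²]`, so every step contracts the error by
`q² = 1 - m² / (1 + λmax(S))² ≤ q`.
-/

open Matrix
open scoped Classical

/-- The largest eigenvalue of a (Hermitian) real matrix. -/
noncomputable def lamMax {n : ℕ} (A : Matrix (Fin n) (Fin n) ℝ) : ℝ :=
  if h : A.IsHermitian then ⨆ i, h.eigenvalues i else 0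

/-- The smallest eigenvalue of a (Hermitian) real matrix. -/
noncomputable def lamMin {n : ℕ} (A : Matrix (Fin n) (Fin n) ℝ) : ℝ :=
  if h : A.IsHermitian then ⨅ i, h.eigenvalues i else 0

open scoped RealInnerProductSpace

namespace Matrix.IsHermitian

variable {ι : Type*} [Fintype ι] [DecidableEq ι] {A : Matrix ι ι ℝ} (hA : A.IsHermitian)

lemma toEuclideanLin_eigenvectorBasis (i : ι) :
    toEuclideanLin A (hA.eigenvectorBasis i) = hA.eigenvalues i • hA.eigenvectorBasis i := by
  apply (WithLp.equiv 2 (ι → ℝ)).injective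
  simpa using hA.mulVec_eigenvectorBasis i

lemma eigenvalues_eq_inner (i : ι) :
    hA.eigenvalues i = ⟪hA.eigenvectorBasis i, toEuclideanLin A (hA.eigenvectorBasis i)⟫ := by
  rw [hA.toEuclideanLin_eigenvectorBasis, real_inner_smul_right,
    real_inner_self_eq_norm_sq, hA.eigenvectorBasis.orthonormal.1 i, one_pow, mul_one]

lemma eigenvectorBasis_repr_toEuclideanLin (x : EuclideanSpace ℝ ι) (i : ι) :
    hA.eigenvectorBasis.repr (toEuclideanLin A x) i =
      hA.eigenvalues i * hA.eigenvectorBasis.repr x i := by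
  rw [OrthonormalBasis.repr_apply_apply, OrthonormalBasis.repr_apply_apply,
    ← (isSymmetric_toEuclideanLin_iff.2 hA) (hA.eigenvectorBasis i) x,
    hA.toEuclideanLin_eigenvectorBasis, real_inner_smul_left]

lemma norm_sq_eq_sum_repr_sq (x : EuclideanSpace ℝ ι) :
    ‖x‖ ^ 2 = ∑ i, hA.eigenvectorBasis.repr x i ^ 2 := by
  rw [← hA.eigenvectorBasis.repr.norm_map x, EuclideanSpace.norm_sq_eq]
  simp only [Real.norm_eq_abs, sq_abs]

lemma inner_toEuclideanLin_self (x : EuclideanSpace ℝ ι) :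
    ⟪x, toEuclideanLin A x⟫ = ∑ i, hA.eigenvalues i * hA.eigenvectorBasis.repr x i ^ 2 := by
  rw [← hA.eigenvectorBasis.repr.inner_map_map, PiLp.inner_apply]
  refine Finset.sum_congr rfl fun i _ => ?_
  rw [RCLike.inner_apply, conj_trivial, hA.eigenvectorBasis_repr_toEuclideanLin]
  ring

lemma norm_sub_smul_toEuclideanLin_le {ζ q : ℝ} (hq : 0 ≤ q)
    (hζ : ∀ i, |1 - ζ * hA.eigenvalues i| ≤ q) (x : EuclideanSpace ℝ ι) :
    ‖x - ζ • toEuclideanLin A x‖ ≤ q * ‖x‖ := by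
  refine pow_le_pow_iff_left₀ (norm_nonneg _) (by positivity) two_ne_zero |>.1 ?_
  rw [mul_pow, hA.norm_sq_eq_sum_repr_sq, hA.norm_sq_eq_sum_repr_sq x, Finset.mul_sum]
  refine Finset.sum_le_sum fun i _ => ?_
  have hcoord : hA.eigenvectorBasis.repr (x - ζ • toEuclideanLin A x) i =
      (1 - ζ * hA.eigenvalues i) * hA.eigenvectorBasis.repr x i := by
    rw [map_sub, map_smul, PiLp.sub_apply, PiLp.smul_apply, smul_eq_mul,
      hA.eigenvectorBasis_repr_toEuclideanLin]
    ring
  rw [hcoord, mul_pow, ← sq_abs (1 - _)]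
  gcongr
  exact hζ i

end Matrix.IsHermitian

lemma inner_toEuclideanLin_vecMulVec_self {ι : Type*} [Fintype ι] [DecidableEq ι]
    (u v : EuclideanSpace ℝ ι) :
    ⟪v, toEuclideanLin (vecMulVec u u) v⟫ = ⟪u, v⟫ ^ 2 := by
  simp only [PiLp.inner_apply, toLpLin_apply, RCLike.inner_apply, conj_trivial]
  simp only [mulVec, dotProduct, vecMulVec_apply, sq, Finset.sum_mul, Finset.mul_sum]
  exact Finset.sum_congr rfl fun _ _ => Finset.sum_congr rfl fun _ _ => by ring

lemma Matrix.posSemidef_vecMulVec_self {ι : Type*} [Fintype ι] (u : ι → ℝ) :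
    (vecMulVec u u).PosSemidef := by
  simpa using posSemidef_vecMulVec_self_star u

section ExtremeEigenvalues

variable {n : ℕ} {A B : Matrix (Fin n) (Fin n) ℝ}

lemma lamMin_le_eigenvalues (hA : A.IsHermitian) (i : Fin n) : lamMin A ≤ hA.eigenvalues i := by
  rw [lamMin, dif_pos hA]
  exact ciInf_le (Finite.bddBelow_range _) i

lemma eigenvalues_le_lamMax (hA : A.IsHermitian) (i : Fin n) : hA.eigenvalues i ≤ lamMax A := by
  rw [lamMax, dif_pos hA]
  exact le_ciSup (Finite.bddAbove_range _) i

lemma lamMin_mul_norm_sq_le_inner (hA : A.IsHermitian) (x : EuclideanSpace ℝ (Fin n)) :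
    lamMin A * ‖x‖ ^ 2 ≤ ⟪x, toEuclideanLin A x⟫ := by
  rw [hA.inner_toEuclideanLin_self, hA.norm_sq_eq_sum_repr_sq, Finset.mul_sum]
  gcongr with i
  exact lamMin_le_eigenvalues hA i

lemma inner_le_lamMax_mul_norm_sq (hA : A.IsHermitian) (x : EuclideanSpace ℝ (Fin n)) :
    ⟪x, toEuclideanLin A x⟫ ≤ lamMax A * ‖x‖ ^ 2 := by
  rw [hA.inner_toEuclideanLin_self, hA.norm_sq_eq_sum_repr_sq, Finset.mul_sum]
  gcongr with i
  exact eigenvalues_le_lamMax hA i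

variable [Nonempty (Fin n)]

lemma le_lamMin (hA : A.IsHermitian) {a : ℝ} (h : ∀ i, a ≤ hA.eigenvalues i) : a ≤ lamMin A := by
  rw [lamMin, dif_pos hA]
  exact le_ciInf h

lemma lamMax_le (hA : A.IsHermitian) {b : ℝ} (h : ∀ i, hA.eigenvalues i ≤ b) : lamMax A ≤ b := by
  rw [lamMax, dif_pos hA]
  exact ciSup_le h

lemma lamMin_le_lamMax (hA : A.IsHermitian) : lamMin A ≤ lamMax A :=
  let i : Fin n := Classical.arbitrary _
  (lamMin_le_eigenvalues hA i).trans (eigenvalues_le_lamMax hA i)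

lemma Matrix.PosDef.lamMin_pos (hA : A.PosDef) : 0 < lamMin A := by
  obtain ⟨i, hi⟩ := exists_eq_ciInf_of_finite (f := hA.1.eigenvalues)
  rw [lamMin, dif_pos hA.1, ← hi]
  exact hA.eigenvalues_pos i

lemma Matrix.PosSemidef.lamMin_nonneg (hA : A.PosSemidef) : 0 ≤ lamMin A :=
  le_lamMin hA.1 hA.eigenvalues_nonneg

lemma lamMin_add_lamMin_le_lamMin_add (hA : A.IsHermitian) (hB : B.IsHermitian) :
    lamMin A + lamMin B ≤ lamMin (A + B) := by
  refine le_lamMin (hA.add hB) fun i => ?_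
  have hv := (hA.add hB).eigenvectorBasis.orthonormal.1 i
  have hAv := lamMin_mul_norm_sq_le_inner hA ((hA.add hB).eigenvectorBasis i)
  have hBv := lamMin_mul_norm_sq_le_inner hB ((hA.add hB).eigenvectorBasis i)
  rw [hv, one_pow, mul_one] at hAv hBv
  rw [(hA.add hB).eigenvalues_eq_inner, map_add, LinearMap.add_apply, inner_add_right]
  exact add_le_add hAv hBv

lemma lamMax_add_le_lamMax_add_lamMax (hA : A.IsHermitian) (hB : B.IsHermitian) :
    lamMax (A + B) ≤ lamMax A + lamMax B := by
  refine lamMax_le (hA.add hB) fun i => ?_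
  have hv := (hA.add hB).eigenvectorBasis.orthonormal.1 i
  have hAv := inner_le_lamMax_mul_norm_sq hA ((hA.add hB).eigenvectorBasis i)
  have hBv := inner_le_lamMax_mul_norm_sq hB ((hA.add hB).eigenvectorBasis i)
  rw [hv, one_pow, mul_one] at hAv hBv
  rw [(hA.add hB).eigenvalues_eq_inner, map_add, LinearMap.add_apply, inner_add_right]
  exact add_le_add hAv hBv

lemma lamMax_vecMulVec_self_le (u : EuclideanSpace ℝ (Fin n)) :
    lamMax (vecMulVec u u) ≤ ‖u‖ ^ 2 := by
  have hP := (posSemidef_vecMulVec_self u).1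
  refine lamMax_le hP fun i => ?_
  rw [hP.eigenvalues_eq_inner, inner_toEuclideanLin_vecMulVec_self, ← sq_abs]
  calc |⟪u, hP.eigenvectorBasis i⟫| ^ 2 ≤ (‖u‖ * ‖hP.eigenvectorBasis i‖) ^ 2 := by
        gcongr
        exact abs_real_inner_le_norm _ _
    _ = ‖u‖ ^ 2 := by rw [hP.eigenvectorBasis.orthonormal.1 i, mul_one]

end ExtremeEigenvalues

lemma abs_one_sub_div_sq_mul_le {m M t : ℝ} (hm : 0 < m) (hmt : m ≤ t) (htM : t ≤ M) :
    |1 - m / M ^ 2 * t| ≤ 1 - m ^ 2 / M ^ 2 := by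
  have hM : 0 < M := by linarith
  have ha : 0 < m / M ^ 2 := by positivity
  have haM : m / M ^ 2 * M ≤ 1 := by
    rw [div_mul_eq_mul_div, sq, mul_div_mul_right _ _ hM.ne', div_le_one hM]
    linarith
  rw [show m ^ 2 / M ^ 2 = m / M ^ 2 * m by ring, abs_le]
  constructor <;> nlinarith

noncomputable def adaptiveGain {n : ℕ} (S : Matrix (Fin n) (Fin n) ℝ)
    (u : EuclideanSpace ℝ (Fin n)) : ℝ :=
  lamMin S / (lamMax (vecMulVec u u) + lamMax S) ^ 2

lemma norm_sub_adaptiveGain_smul_le {n : ℕ} [Nonempty (Fin n)] {S : Matrix (Fin n) (Fin n) ℝ}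
    (hS : S.PosDef) {u : EuclideanSpace ℝ (Fin n)} (hu : ‖u‖ ≤ 1) (y : EuclideanSpace ℝ (Fin n)) :
    ‖y - adaptiveGain S u • toEuclideanLin (S + vecMulVec u u) y‖ ≤
      (1 - lamMin S ^ 2 / (1 + lamMax S) ^ 2) * ‖y‖ := by
  have hP := posSemidef_vecMulVec_self u
  have hA := hS.1.add hP.1
  set m := lamMin S
  set M := lamMax (vecMulVec u u) + lamMax S
  have hm : 0 < m := hS.lamMin_pos
  have hbounds : ∀ i, m ≤ hA.eigenvalues i ∧ hA.eigenvalues i ≤ M := fun i =>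
    ⟨by linarith [lamMin_add_lamMin_le_lamMin_add hS.1 hP.1, lamMin_le_eigenvalues hA i,
        hP.lamMin_nonneg],
      by linarith [eigenvalues_le_lamMax hA i, lamMax_add_le_lamMax_add_lamMax hS.1 hP.1]⟩
  have hmM : m ≤ M :=
    let i : Fin n := Classical.arbitrary _
    (hbounds i).1.trans (hbounds i).2
  have hM : M ≤ 1 + lamMax S := by
    linarith [lamMax_vecMulVec_self_le u, pow_le_one₀ (n := 2) (norm_nonneg u) hu]
  have hrate : 0 ≤ 1 - m ^ 2 / M ^ 2 :=
    sub_nonneg.2 (div_le_one_of_le₀ (pow_le_pow_left₀ hm.le hmM 2) (sq_nonneg _))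
  calc _ ≤ (1 - m ^ 2 / M ^ 2) * ‖y‖ := hA.norm_sub_smul_toEuclideanLin_le hrate
        (fun i => abs_one_sub_div_sq_mul_le hm (hbounds i).1 (hbounds i).2) y
    _ ≤ (1 - m ^ 2 / (1 + lamMax S) ^ 2) * ‖y‖ := by
        have : 0 < M := hm.trans_le hmM
        gcongr

/-- Exponential convergence of the data-driven adaptive relative-localization estimator:
with recorded data matrix `S` positive definite, normalized regression vectors `‖Φ_k‖ ≤ 1`,
update `x_{k+1} = x_k − ζ_k (S + Φ_kΦ_kᵀ) x_k` with gain
`ζ_k = λmin(S)/(λmax(Φ_kΦ_kᵀ) + λmax(S))²`, the error satisfies `‖x_k‖ ≤ q^k ‖x_0‖` where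
`q = √(1 − λmin(S)²/(1 + λmax(S))²) < 1`. -/
theorem adaptive_estimator_exponential_convergence (n : ℕ) (hn : 1 ≤ n)
    (S : Matrix (Fin n) (Fin n) ℝ) (hS : S.PosDef)
    (Φ : ℕ → EuclideanSpace ℝ (Fin n)) (hΦ : ∀ k, ‖Φ k‖ ≤ 1)
    (x : ℕ → EuclideanSpace ℝ (Fin n))
    (hx : ∀ k, x (k + 1) = x k -
      (lamMin S / (lamMax (vecMulVec (Φ k) (Φ k)) + lamMax S) ^ 2) •
        (Matrix.toEuclideanLin (S + vecMulVec (Φ k) (Φ k)) (x k))) :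
    (∀ k, ‖x k‖ ≤ (Real.sqrt (1 - lamMin S ^ 2 / (1 + lamMax S) ^ 2)) ^ k * ‖x 0‖) ∧
      Real.sqrt (1 - lamMin S ^ 2 / (1 + lamMax S) ^ 2) < 1 := by
  have : Nonempty (Fin n) := ⟨⟨0, hn⟩⟩
  have hm : 0 < lamMin S := hS.lamMin_pos
  have hdecay : 0 < lamMin S ^ 2 / (1 + lamMax S) ^ 2 := by
    have := lamMin_le_lamMax hS.1
    have : 0 < 1 + lamMax S := by linarith
    positivity
  refine ⟨fun k => le_geom (u := fun k => ‖x k‖) (Real.sqrt_nonneg _) k fun j _ => ?_, ?_⟩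
  · rw [hx j]
    exact (norm_sub_adaptiveGain_smul_le hS (hΦ j) (x j)).trans <|
      mul_le_mul_of_nonneg_right (Real.le_sqrt_self_iff.2 (by linarith)) (norm_nonneg _)
  · rw [Real.sqrt_lt' one_pos]
    linarith
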